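/- The 6-dimensional real Lie algebra g = s_{5,41}^{-1,-1} × R, with structure equations (e^{14}, e^{25}, -e^{34} - e^{35}, 0, 0, 0), does not admit any complex structure: there is no linear endomorphism J of g with J^2 = -Id whose Nijenhuis tensor N_J(x,y) = [x,y] + J([Jx,y]+[x,Jy]) - [Jx,Jy] vanishes identically. -/
import Mathlib


namespace Stmt4

abbrev V : Type := Fin 6 → ℝ

/-- standard basis -/
noncomputable def e (i : Fin 6) : V := Pi.single i 1

/-- the Lie bracket -/
def br (x y : V) : V := fun k =>
  match k with
  | 0 => -(x 0 * y 3 - x 3 * y 0)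
  | 1 => -(x 1 * y 4 - x 4 * y 1)
  | 2 => (x 2 * y 3 - x 3 * y 2) + (x 2 * y 4 - x 4 * y 2)
  | 3 => 0
  | 4 => 0
  | 5 => 0

/-- the adjoint operator `ad x = [x, ·]` as a linear endomorphism -/
noncomputable def ad (x : V) : V →ₗ[ℝ] V where
  toFun := br x
  map_add' := by intro a b; funext k; fin_cases k <;> simp [br] <;> ring
  map_smul' := by intro c a; funext k; fin_cases k <;> simp [br] <;> ring

/-- the Nijenhuis tensor of an endomorphism `J` -/
noncomputable def nijenhuis (J : V →ₗ[ℝ] V) (x y : V) : V :=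
  br x y + J (br (J x) y + br x (J y)) - br (J x) (J y)

/-- the Koszul 1-form `ψ(x) = Tr(J ∘ ad x) - Tr(ad (J x))` -/
noncomputable def psi (J : V →ₗ[ℝ] V) (x : V) : ℝ :=
  LinearMap.trace ℝ V (J ∘ₗ ad x) - LinearMap.trace ℝ V (ad (J x))

/-- component values of the standard basis -/
lemma e_apply (i k : Fin 6) : e i k = if k = i then 1 else 0 := by
  simp [e, Pi.single_apply]

@[simp] lemma vec6_four {α : Type*} (a b c d e' f : α) :
    (![a, b, c, d, e', f] : Fin 6 → α) 4 = e' := rfl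

@[simp] lemma vec6_five {α : Type*} (a b c d e' f : α) :
    (![a, b, c, d, e', f] : Fin 6 → α) 5 = f := rfl

/-- auxiliary: a rotation-type 2x2 system with a nonzero solution forces both
coefficients to vanish -/
lemma key2 (P Q x y : ℝ) (h1 : P * x + Q * y = 0) (h2 : -Q * x + P * y = 0)
    (hxy : x ≠ 0 ∨ y ≠ 0) : P = 0 ∧ Q = 0 := by
  have hsx : (P ^ 2 + Q ^ 2) * x = 0 := by linear_combination P * h1 - Q * h2
  have hsy : (P ^ 2 + Q ^ 2) * y = 0 := by linear_combination Q * h1 + P * h2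
  have hPQ : P ^ 2 + Q ^ 2 = 0 := by
    rcases hxy with hx | hy
    · exact (mul_eq_zero.mp hsx).resolve_right hx
    · exact (mul_eq_zero.mp hsy).resolve_right hy
  constructor <;> nlinarith [sq_nonneg P, sq_nonneg Q]

/-- auxiliary: c + d*t = 0 and d - c*t = 0 force c = d = 0 -/
lemma key3 (c d t : ℝ) (h1 : c + d * t = 0) (h2 : d - c * t = 0) : c = 0 ∧ d = 0 := by
  have h : c ^ 2 + d ^ 2 = 0 := by linear_combination c * h1 + d * h2
  constructor <;> nlinarith [sq_nonneg c, sq_nonneg d]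

set_option maxHeartbeats 1000000 in
/-- the Lie algebra `s_{5,41}^{-1,-1} × ℝ` admits no complex structure:
no endomorphism `J` satisfies `J² = -Id` and `N_J ≡ 0`. -/
theorem stmt_4 :
    ¬ ∃ J : V →ₗ[ℝ] V,
        (∀ x : V, J (J x) = -x) ∧ (∀ x y : V, nijenhuis J x y = 0) := by
  rintro ⟨J, hJ2, hN⟩
  classical
  -- Step A: there is a nonzero u in n = span(e1,e2,e3) with J u ∈ n
  have key : ∃ u : V, u 3 = 0 ∧ u 4 = 0 ∧ u 5 = 0 ∧
      (J u) 3 = 0 ∧ (J u) 4 = 0 ∧ (J u) 5 = 0 ∧ u ≠ 0 := by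
    by_contra hker
    push_neg at hker
    have step : ∀ j k : Fin 6, br (e j) (e k) = 0 →
        br (J (e j)) (e k) + br (e j) (J (e k)) = 0 := by
      intro j k h0
      have hn := hN (e j) (e k)
      unfold nijenhuis at hn
      rw [h0, zero_add, sub_eq_zero] at hn
      refine hker _ (by simp [br]) (by simp [br]) (by simp [br]) ?_ ?_ ?_
      · rw [hn]; simp [br]
      · rw [hn]; simp [br]
      · rw [hn]; simp [br]
    have h01 := step 0 1 (by funext k; fin_cases k <;> simp [br, e_apply])
    have h02 := step 0 2 (by funext k; fin_cases k <;> simp [br, e_apply])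
    have h12 := step 1 2 (by funext k; fin_cases k <;> simp [br, e_apply])
    have c13 : J (e 1) 3 = 0 := by
      have t := congrFun h01 0; simp [br, e_apply] at t; linarith
    have c04 : J (e 0) 4 = 0 := by
      have t := congrFun h01 1; simp [br, e_apply] at t; linarith
    have c23 : J (e 2) 3 = 0 := by
      have t := congrFun h02 0; simp [br, e_apply] at t; linarith
    have c03 : J (e 0) 3 = 0 := by
      have t := congrFun h02 2; simp [br, e_apply] at t; linarith
    have c24 : J (e 2) 4 = 0 := by
      have t := congrFun h12 1; simp [br, e_apply] at t; linarith
    have c14 : J (e 1) 4 = 0 := by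
      have t := congrFun h12 2; simp [br, e_apply] at t; linarith
    -- the candidate kernel vector
    have hw : (J (e 1) 5 • e 0 - J (e 0) 5 • e 1 : V) = 0 := by
      refine hker _ ?_ ?_ ?_ ?_ ?_ ?_
      · simp [e_apply]
      · simp [e_apply]
      · simp [e_apply]
      · rw [map_sub, map_smul, map_smul]; simp [c03, c13]
      · rw [map_sub, map_smul, map_smul]; simp [c04, c14]
      · rw [map_sub, map_smul, map_smul]; simp; ring
    have hq : J (e 1) 5 = 0 := by
      have t := congrFun hw 0; simp [e_apply] at t; linarith
    have hp : J (e 0) 5 = 0 := by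
      have t := congrFun hw 1; simp [e_apply] at t; linarith
    have he0 : (e 0 : V) = 0 := by
      refine hker _ ?_ ?_ ?_ ?_ ?_ ?_
      · simp [e_apply]
      · simp [e_apply]
      · simp [e_apply]
      · exact c03
      · exact c04
      · exact hp
    have := congrFun he0 0
    simp [e_apply] at this
  obtain ⟨u, hu3, hu4, hu5, hv3, hv4, hv5, hu0⟩ := key
  have hJv : J (J u) = -u := hJ2 u
  -- Step C: independence of u and J u
  have hind : ∀ s t : ℝ, s • u + t • (J u) = 0 → s = 0 ∧ t = 0 := by
    intro s t h
    have h2 : s • (J u) - t • u = (0 : V) := by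
      have h' := congrArg J h
      rw [map_add, map_smul, map_smul, hJv, map_zero, smul_neg] at h'
      funext k
      have := congrFun h' k
      simp only [Pi.add_apply, Pi.sub_apply, Pi.neg_apply, Pi.smul_apply, smul_eq_mul,
        Pi.zero_apply] at this ⊢
      linarith
    have hsum : (s ^ 2 + t ^ 2) • u = (0 : V) := by
      funext k
      have a1 := congrFun h k
      have a2 := congrFun h2 k
      simp only [Pi.add_apply, Pi.sub_apply, Pi.smul_apply, smul_eq_mul, Pi.zero_apply] at a1 a2 ⊢
      linear_combination s * a1 - t * a2
    rcases eq_or_ne (s ^ 2 + t ^ 2) 0 with hz | hz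
    · constructor <;> nlinarith [sq_nonneg s, sq_nonneg t]
    · exact absurd ((smul_eq_zero.mp hsum).resolve_left hz) hu0
  -- Step D: the vectors s and r
  set s : V := ![u 0 - J (e 3) 3 * J u 0, -(J (e 3) 4 * J u 1),
      -(u 2) + (J (e 3) 3 + J (e 3) 4) * J u 2, 0, 0, 0] with hs
  set r : V := ![J u 0 + J (e 3) 3 * u 0, J (e 3) 4 * u 1,
      -(J u 2) - (J (e 3) 3 + J (e 3) 4) * u 2, 0, 0, 0] with hr
  have hJr : J r = -s := by
    have hn := hN u (e 3)
    unfold nijenhuis at hn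
    have harg : br (J u) (e 3) + br u (J (e 3)) = -r := by
      funext k
      fin_cases k <;>
        simp [br, e, Pi.single_apply, hr, hu3, hu4, hu5, hv3, hv4, hv5] <;> ring
    rw [harg, map_neg] at hn
    have h2 : J r = br u (e 3) - br (J u) (J (e 3)) := by
      funext k
      have hk := congrFun hn k
      simp only [Pi.add_apply, Pi.sub_apply, Pi.neg_apply, Pi.zero_apply] at hk ⊢
      linarith
    rw [h2]
    funext k
    fin_cases k <;>
      simp [br, e, Pi.single_apply, hs, hu3, hu4, hu5, hv3, hv4, hv5] <;> ring
  have hJs : J s = r := by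
    have hn := hN (J u) (e 3)
    unfold nijenhuis at hn
    rw [hJv] at hn
    have harg : br (-u) (e 3) + br (J u) (J (e 3)) = s := by
      funext k
      fin_cases k <;>
        simp [br, e, Pi.single_apply, hs, hu3, hu4, hu5, hv3, hv4, hv5] <;> ring
    rw [harg] at hn
    have h2 : J s = br (-u) (J (e 3)) - br (J u) (e 3) := by
      funext k
      have hk := congrFun hn k
      simp only [Pi.add_apply, Pi.sub_apply, Pi.neg_apply, Pi.zero_apply] at hk ⊢
      linarith
    rw [h2]
    funext k
    fin_cases k <;>
      simp [br, e, Pi.single_apply, hr, hu3, hu4, hu5, hv3, hv4, hv5] <;> ring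
  -- Step E: dependence of four vectors in 3-space
  obtain ⟨g, hg, i, hgi⟩ : ∃ g : Fin 4 → ℝ,
      (∑ j : Fin 4, g j • (![![u 0, u 1, u 2], ![J u 0, J u 1, J u 2],
        ![s 0, s 1, s 2], ![r 0, r 1, r 2]] : Fin 4 → Fin 3 → ℝ) j = 0) ∧ ∃ i, g i ≠ 0 := by
    have hli : ¬ LinearIndependent ℝ (![![u 0, u 1, u 2], ![J u 0, J u 1, J u 2],
        ![s 0, s 1, s 2], ![r 0, r 1, r 2]] : Fin 4 → Fin 3 → ℝ) := by
      intro h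
      have := h.fintype_card_le_finrank
      simp at this
    exact Fintype.not_linearIndependent_iff.mp hli
  rw [Fin.sum_univ_four] at hg
  have hrel : g 0 • u + g 1 • (J u) + g 2 • s + g 3 • r = 0 := by
    funext k
    have t0 := congrFun hg 0
    have t1 := congrFun hg 1
    have t2 := congrFun hg 2
    simp only [Matrix.cons_val_zero, Matrix.cons_val_one, Matrix.head_cons, Matrix.cons_val_two,
      Matrix.tail_cons, Matrix.cons_val_three, Pi.add_apply, Pi.smul_apply, smul_eq_mul,
      Pi.zero_apply] at t0 t1 t2
    fin_cases k <;>
      simp only [Pi.add_apply, Pi.smul_apply, smul_eq_mul, Pi.zero_apply] <;>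
      first
        | (exact t0)
        | (exact t1)
        | (exact t2)
        | (simp [hs, hr, hu3, hu4, hu5, hv3, hv4, hv5])
  have hrelJ : g 0 • (J u) + g 1 • (-u) + g 2 • r + g 3 • (-s) = 0 := by
    have h' := congrArg J hrel
    rw [map_add, map_add, map_add, map_smul, map_smul, map_smul, map_smul, map_zero,
      hJv, hJr, hJs] at h'
    exact h'
  -- scalar equations at components 0, 1, 2
  have e10 := congrFun hrel 0
  have e11 := congrFun hrel 1
  have e12 := congrFun hrel 2
  have e20 := congrFun hrelJ 0
  have e21 := congrFun hrelJ 1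
  have e22 := congrFun hrelJ 2
  simp only [Pi.add_apply, Pi.smul_apply, Pi.neg_apply, smul_eq_mul, Pi.zero_apply, hs, hr,
    Matrix.cons_val_zero, Matrix.cons_val_one, Matrix.head_cons, Matrix.cons_val_two,
    Matrix.tail_cons] at e10 e11 e12 e20 e21 e22
  have H0 : u 0 ≠ 0 ∨ J u 0 ≠ 0 →
      (g 0 + g 2 + g 3 * J (e 3) 3 = 0 ∧ g 1 + g 3 - g 2 * J (e 3) 3 = 0) := by
    intro h
    exact key2 _ _ _ _ (by linear_combination e10) (by linear_combination e20) h
  have H1 : u 1 ≠ 0 ∨ J u 1 ≠ 0 →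
      (g 0 + g 3 * J (e 3) 4 = 0 ∧ g 1 - g 2 * J (e 3) 4 = 0) := by
    intro h
    exact key2 _ _ _ _ (by linear_combination e11) (by linear_combination e21) h
  have H2 : u 2 ≠ 0 ∨ J u 2 ≠ 0 →
      (g 0 - g 2 - g 3 * (J (e 3) 3 + J (e 3) 4) = 0 ∧
       g 1 + g 2 * (J (e 3) 3 + J (e 3) 4) - g 3 = 0) := by
    intro h
    exact key2 _ _ _ _ (by linear_combination e12) (by linear_combination e22) h
  -- first: if g 2 = g 3 = 0 then independence kills g
  by_cases hcd : g 2 = 0 ∧ g 3 = 0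
  · have h' : g 0 • u + g 1 • (J u) = 0 := by
      have := hrel
      rw [hcd.1, hcd.2] at this
      simpa using this
    obtain ⟨ha, hb⟩ := hind _ _ h'
    fin_cases i
    · exact hgi ha
    · exact hgi hb
    · exact hgi hcd.1
    · exact hgi hcd.2
  · -- main case analysis on which components of (u, J u) are nonzero
    by_cases z0 : u 0 ≠ 0 ∨ J u 0 ≠ 0
    · by_cases z1 : u 1 ≠ 0 ∨ J u 1 ≠ 0
      · obtain ⟨p0, q0⟩ := H0 z0
        obtain ⟨p1, q1⟩ := H1 z1
        exact hcd (key3 (g 2) (g 3) (J (e 3) 3 - J (e 3) 4)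
          (by linear_combination p0 - p1) (by linear_combination q0 - q1))
      · by_cases z2 : u 2 ≠ 0 ∨ J u 2 ≠ 0
        · obtain ⟨p0, q0⟩ := H0 z0
          obtain ⟨p2, q2⟩ := H2 z2
          have h1 : 2 * g 2 + g 3 * (2 * J (e 3) 3 + J (e 3) 4) = 0 := by
            linear_combination p0 - p2
          have h2 : 2 * g 3 - g 2 * (2 * J (e 3) 3 + J (e 3) 4) = 0 := by
            linear_combination q0 - q2
          have hc2 : g 2 = 0 ∧ g 3 = 0 := by
            have h : 4 * (g 2 ^ 2 + g 3 ^ 2) = 0 := by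
              linear_combination 2 * g 2 * h1 + 2 * g 3 * h2
            constructor <;> nlinarith [sq_nonneg (g 2), sq_nonneg (g 3)]
          exact hcd hc2
        · -- only component 0 can be nonzero
          push_neg at z1 z2
          have hrel2 : (J u 0) • u + (-(u 0)) • (J u) = 0 := by
            funext k
            fin_cases k <;>
              simp [z1.1, z1.2, z2.1, z2.2, hu3, hu4, hu5, hv3, hv4, hv5] <;> try ring
          obtain ⟨hA, hB⟩ := hind _ _ hrel2
          have hu00 : u 0 = 0 := by linarith
          exact hu0 (by funext k; fin_cases k <;> simp [hu00, z1.1, z2.1, hu3, hu4, hu5])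
    · push_neg at z0
      by_cases z1 : u 1 ≠ 0 ∨ J u 1 ≠ 0
      · by_cases z2 : u 2 ≠ 0 ∨ J u 2 ≠ 0
        · obtain ⟨p1, q1⟩ := H1 z1
          obtain ⟨p2, q2⟩ := H2 z2
          exact hcd (key3 (g 2) (g 3) (J (e 3) 3 + 2 * J (e 3) 4)
            (by linear_combination p1 - p2) (by linear_combination q1 - q2))
        · -- only component 1 can be nonzero
          push_neg at z2
          have hrel2 : (J u 1) • u + (-(u 1)) • (J u) = 0 := by
            funext k
            fin_cases k <;>
              simp [z0.1, z0.2, z2.1, z2.2, hu3, hu4, hu5, hv3, hv4, hv5] <;> try ring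
          obtain ⟨hA, hB⟩ := hind _ _ hrel2
          have hu00 : u 1 = 0 := by linarith
          exact hu0 (by funext k; fin_cases k <;> simp [hu00, z0.1, z2.1, hu3, hu4, hu5])
      · by_cases z2 : u 2 ≠ 0 ∨ J u 2 ≠ 0
        · -- only component 2 can be nonzero
          push_neg at z1
          have hrel2 : (J u 2) • u + (-(u 2)) • (J u) = 0 := by
            funext k
            fin_cases k <;>
              simp [z0.1, z0.2, z1.1, z1.2, hu3, hu4, hu5, hv3, hv4, hv5] <;> try ring
          obtain ⟨hA, hB⟩ := hind _ _ hrel2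
          have hu00 : u 2 = 0 := by linarith
          exact hu0 (by funext k; fin_cases k <;> simp [hu00, z0.1, z1.1, hu3, hu4, hu5])
        · push_neg at z1 z2
          exact hu0 (by funext k; fin_cases k <;> simp [z0.1, z1.1, z2.1, hu3, hu4, hu5])
  
end Stmt4
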